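/- arXiv:2010.01321 — 4 statements merged into one kernel-verified Lean document; each statement's English description precedes it below -/
import Mathlib

section
/- The past confluence property fails in the frame T = {(x,y) ∈ ℝ² : x + y > 0} with relation (x,y) R (x',y') iff x < x' and y < y': there exist points p, q, r ∈ T with q R p and r R p but no point s ∈ T with s R q and s R r. -/
/-- Past confluence fails in the triangle frame `T = {(x,y) : x + y > 0}` with the
strict product relation. -/
theorem stmt8 :
    ∃ p q r : ℝ × ℝ, p.1 + p.2 > 0 ∧ q.1 + q.2 > 0 ∧ r.1 + r.2 > 0 ∧
      (q.1 < p.1 ∧ q.2 < p.2) ∧ (r.1 < p.1 ∧ r.2 < p.2) ∧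
      ¬ ∃ s : ℝ × ℝ, s.1 + s.2 > 0 ∧ (s.1 < q.1 ∧ s.2 < q.2) ∧ (s.1 < r.1 ∧ s.2 < r.2) := by
  refine ⟨(2, 2), (1, 0), (0, 1), by norm_num, by norm_num, by norm_num, by norm_num,
    by norm_num, ?_⟩
  -- A common lower bound of (1, 0) and (0, 1) has both coordinates negative, so it leaves T.
  rintro ⟨s, hs, ⟨-, hs₂⟩, ⟨hs₁, -⟩⟩
  dsimp only at hs₁ hs₂
  linarith
end

section
/- Let X be a nonempty closed bounded subset of ℝ, and let ≈ be an equivalence relation on X whose equivalence classes are all closed and order-convex (with respect to the order inherited from ℝ). If there is more than one equivalence class, and ≈ contains the successor relation (i.e., x ≈ y whenever there is no z ∈ X strictly between x and y), then uncountably many equivalence classes are singletons. -/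
/-!
Let `M` be the set of least elements of the classes; it meets each class exactly once and
contains every singleton class. The classes that are not singletons contain pairwise disjoint
open intervals, so there are countably many of them, and it suffices to show that `M` is
uncountable. Between the top of the class of `u ∈ M` and a larger `v ∈ M` the successor
condition puts a point of `X`, whose class minimum lies strictly between `u` and `v`; so `M` is
densely ordered. By closedness and convexity of the classes, `M` is closed under suprema. A
countable, densely ordered, sup-closed set of reals with two points is impossible: nested
intervals with endpoints in `M` avoiding an enumeration of `M` shrink to a point of `M`.
-/

open Set

section NestedIntervals

variable {M : Set ℝ}

theorem exists_Icc_subset_Ioo_notMem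
    (hdense : ∀ a ∈ M, ∀ b ∈ M, a < b → ∃ c ∈ M, a < c ∧ c < b)
    (t : ℝ) {a b : ℝ} (ha : a ∈ M) (hb : b ∈ M) (hab : a < b) :
    ∃ a' ∈ M, ∃ b' ∈ M, a < a' ∧ a' < b' ∧ b' < b ∧ t ∉ Icc a' b' := by
  obtain ⟨p, hp, hap, hpb⟩ := hdense a ha b hb hab
  rcases le_or_gt t p with htp | hpt
  · obtain ⟨q, hq, hpq, hqb⟩ := hdense p hp b hb hpb
    obtain ⟨s, hs, hqs, hsb⟩ := hdense q hq b hb hqb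
    exact ⟨q, hq, s, hs, hap.trans hpq, hqs, hsb, fun ht => (htp.trans_lt hpq).not_ge ht.1⟩
  · obtain ⟨q, hq, haq, hqp⟩ := hdense a ha p hp hap
    obtain ⟨s, hs, has, hsq⟩ := hdense a ha q hq haq
    exact ⟨s, hs, q, hq, has, hsq, hqp.trans hpb, fun ht => (hqp.trans hpt).not_ge ht.2⟩

theorem exists_nested_Icc_avoiding
    (hdense : ∀ a ∈ M, ∀ b ∈ M, a < b → ∃ c ∈ M, a < c ∧ c < b)
    {u v : ℝ} (hu : u ∈ M) (hv : v ∈ M) (huv : u < v) (e : ℕ → ℝ) :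
    ∃ a b : ℕ → ℝ, (∀ n, a n ∈ M) ∧ Monotone a ∧ Antitone b ∧ a ≤ b ∧
      ∀ n, e n ∉ Icc (a (n + 1)) (b (n + 1)) := by
  choose! f hfM g hgM hlt_f hfg hlt_g hnot using
    fun t a b (ha : a ∈ M) (hb : b ∈ M) (hab : a < b) =>
      exists_Icc_subset_Ioo_notMem hdense t ha hb hab
  let I : ℕ → ℝ × ℝ := fun n =>
    Nat.rec (u, v) (fun k p => (f (e k) p.1 p.2, g (e k) p.1 p.2)) n
  have hI : ∀ n, (I n).1 ∈ M ∧ (I n).2 ∈ M ∧ (I n).1 < (I n).2 := by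
    intro n
    induction n with
    | zero => exact ⟨hu, hv, huv⟩
    | succ n ih =>
      exact ⟨hfM _ _ _ ih.1 ih.2.1 ih.2.2, hgM _ _ _ ih.1 ih.2.1 ih.2.2,
        hfg _ _ _ ih.1 ih.2.1 ih.2.2⟩
  refine ⟨fun n => (I n).1, fun n => (I n).2, fun n => (hI n).1,
    monotone_nat_of_le_succ fun n => ?_, antitone_nat_of_succ_le fun n => ?_,
    fun n => (hI n).2.2.le, fun n => ?_⟩
  · exact (hlt_f _ _ _ (hI n).1 (hI n).2.1 (hI n).2.2).le
  · exact (hlt_g _ _ _ (hI n).1 (hI n).2.1 (hI n).2.2).le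
  · exact hnot _ _ _ (hI n).1 (hI n).2.1 (hI n).2.2

theorem not_countable_of_exists_between_of_sSup_mem
    (hdense : ∀ a ∈ M, ∀ b ∈ M, a < b → ∃ c ∈ M, a < c ∧ c < b)
    (hsSup : ∀ A ⊆ M, A.Nonempty → BddAbove A → sSup A ∈ M)
    (hM : M.Nontrivial) : ¬ M.Countable := by
  intro hcount
  obtain ⟨u, hu, v, hv, huv⟩ := hM.exists_lt
  obtain ⟨e, rfl⟩ := hcount.exists_eq_range ⟨u, hu⟩
  obtain ⟨a, b, haM, ha, hb, hab, havoid⟩ := exists_nested_Icc_avoiding hdense hu hv huv e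
  have hsup_mem : (⨆ n, a n) ∈ range e :=
    hsSup _ (range_subset_iff.2 haM) (range_nonempty a) ⟨b 0, forall_mem_range.2 fun n =>
      (hab n).trans (hb (Nat.zero_le n))⟩
  obtain ⟨N, hN⟩ := hsup_mem
  exact havoid N (hN ▸ mem_iInter.1 (ha.ciSup_mem_iInter_Icc_of_antitone hb hab) (N + 1))

end NestedIntervals

def relClass (X : Set ℝ) (r : ℝ → ℝ → Prop) (x : ℝ) : Set ℝ := {y | y ∈ X ∧ r y x}

def classMinima (X : Set ℝ) (r : ℝ → ℝ → Prop) : Set ℝ := {x | IsLeast (relClass X r x) x}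

structure IsConvexClosedEquiv (X : Set ℝ) (r : ℝ → ℝ → Prop) : Prop where
  refl : ∀ x ∈ X, r x x
  symm : ∀ x ∈ X, ∀ y ∈ X, r x y → r y x
  trans : ∀ x ∈ X, ∀ y ∈ X, ∀ z ∈ X, r x y → r y z → r x z
  isClosed_relClass : ∀ x ∈ X, IsClosed (relClass X r x)
  convex : ∀ x ∈ X, ∀ a ∈ X, ∀ b ∈ X, ∀ z ∈ X, r a x → r b x → a ≤ z → z ≤ b → r z x

namespace IsConvexClosedEquiv

variable {X : Set ℝ} {r : ℝ → ℝ → Prop} {x y z m m' : ℝ}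

theorem mem_relClass_self (h : IsConvexClosedEquiv X r) (hx : x ∈ X) : x ∈ relClass X r x :=
  ⟨hx, h.refl x hx⟩

theorem relClass_eq (h : IsConvexClosedEquiv X r) (hx : x ∈ X) (hy : y ∈ relClass X r x) :
    relClass X r y = relClass X r x := by
  ext z
  exact ⟨fun hz => ⟨hz.1, h.trans z hz.1 y hy.1 x hx hz.2 hy.2⟩,
    fun hz => ⟨hz.1, h.trans z hz.1 x hx y hy.1 hz.2 (h.symm y hy.1 x hx hy.2)⟩⟩

theorem mem_relClass_of_le_of_le (h : IsConvexClosedEquiv X r) (hx : x ∈ X)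
    {a b : ℝ} (ha : a ∈ relClass X r x) (hb : b ∈ relClass X r x) (hz : z ∈ X)
    (haz : a ≤ z) (hzb : z ≤ b) : z ∈ relClass X r x :=
  ⟨hz, h.convex x hx a ha.1 b hb.1 z hz ha.2 hb.2 haz hzb⟩

theorem isCompact_relClass (h : IsConvexClosedEquiv X r) (hX : IsCompact X) (hx : x ∈ X) :
    IsCompact (relClass X r x) :=
  hX.of_isClosed_subset (h.isClosed_relClass x hx) fun _ hy => hy.1

theorem isGreatest_sSup_relClass (h : IsConvexClosedEquiv X r) (hX : IsCompact X)
    (hx : x ∈ X) : IsGreatest (relClass X r x) (sSup (relClass X r x)) :=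
  (h.isCompact_relClass hX hx).isGreatest_sSup ⟨x, h.mem_relClass_self hx⟩

theorem exists_mem_classMinima_mem_relClass (h : IsConvexClosedEquiv X r) (hX : IsCompact X)
    (hx : x ∈ X) : ∃ m ∈ classMinima X r, m ∈ relClass X r x := by
  obtain ⟨m, hm⟩ := (h.isCompact_relClass hX hx).exists_isLeast ⟨x, h.mem_relClass_self hx⟩
  refine ⟨m, ?_, hm.1⟩
  show IsLeast (relClass X r m) m
  rwa [h.relClass_eq hx hm.1]

theorem eq_of_mem_relClass (h : IsConvexClosedEquiv X r) (hm : m ∈ classMinima X r)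
    (hm' : m' ∈ classMinima X r) (hmm' : m' ∈ relClass X r m) : m' = m :=
  hm'.unique (h.relClass_eq hm.1.1 hmm' ▸ hm)

theorem lt_of_mem_relClass (h : IsConvexClosedEquiv X r) (hm : m ∈ classMinima X r)
    (hm' : m' ∈ classMinima X r) (hlt : m < m') (hy : y ∈ relClass X r m) : y < m' := by
  by_contra! hle
  have hm'm : m' ∈ relClass X r m := h.mem_relClass_of_le_of_le hm.1.1 hm.1 hy hm'.1.1 hlt.le hle
  exact hlt.ne' (h.eq_of_mem_relClass hm hm' hm'm)

theorem countable_classMinima_diff (h : IsConvexClosedEquiv X r) (hX : IsCompact X) :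
    (classMinima X r \ {x | x ∈ X ∧ ∀ y ∈ X, r y x → y = x}).Countable := by
  refine PairwiseDisjoint.countable_of_Ioo (y := fun m => sSup (relClass X r m)) ?_ ?_
  · intro m hm m' hm' hne
    wlog hlt : m < m' generalizing m m'
    · exact (this hm' hm hne.symm (hne.lt_or_gt.resolve_left hlt)).symm
    have hsep := h.lt_of_mem_relClass hm.1 hm'.1 hlt (h.isGreatest_sSup_relClass hX hm.1.1.1).1
    exact Set.disjoint_left.2 fun z hz hz' => (hz.2.trans (hsep.trans hz'.1)).false
  · rintro m ⟨hm, hns⟩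
    obtain ⟨y, hyX, hym, hne⟩ : ∃ y ∈ X, r y m ∧ y ≠ m := by
      simpa [hm.1.1] using hns
    exact ((hm.2 ⟨hyX, hym⟩).lt_of_ne hne.symm).trans_le
      ((h.isGreatest_sSup_relClass hX hm.1.1).2 ⟨hyX, hym⟩)

theorem exists_mem_classMinima_between (h : IsConvexClosedEquiv X r) (hX : IsCompact X)
    (hsucc : ∀ x ∈ X, ∀ y ∈ X,
      (∀ z ∈ X, ¬ (x < z ∧ z < y) ∧ ¬ (y < z ∧ z < x)) → r x y)
    {u v : ℝ} (hu : u ∈ classMinima X r) (hv : v ∈ classMinima X r) (huv : u < v) :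
    ∃ w ∈ classMinima X r, u < w ∧ w < v := by
  obtain ⟨hg, hg_max⟩ := h.isGreatest_sSup_relClass hX hu.1.1
  set g := sSup (relClass X r u)
  have hgv : g < v := h.lt_of_mem_relClass hu hv huv hg
  have hnot : ¬ r g v := fun hgv' => huv.ne' <| h.eq_of_mem_relClass hu hv <|
    h.relClass_eq hu.1.1 hg ▸ h.relClass_eq hv.1.1 ⟨hg.1, hgv'⟩ ▸ h.mem_relClass_self hv.1.1
  obtain ⟨z, hzX, hgz, hzv⟩ : ∃ z ∈ X, g < z ∧ z < v := by
    by_contra! hno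
    exact hnot <| hsucc g hg.1 v hv.1.1 fun z hzX =>
      ⟨fun hz => (hno z hzX hz.1).not_gt hz.2, fun hz => (hz.1.trans hz.2).not_gt hgv⟩
  obtain ⟨w, hw, hwz⟩ := h.exists_mem_classMinima_mem_relClass hX hzX
  have hzw : z ∈ relClass X r w := h.relClass_eq hzX hwz ▸ h.mem_relClass_self hzX
  refine ⟨w, hw, ?_, (hw.2 hzw).trans_lt hzv⟩
  by_contra! hwu
  have huz : u ∈ relClass X r z :=
    h.mem_relClass_of_le_of_le hzX hwz (h.mem_relClass_self hzX) hu.1.1 hwu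
      ((hg_max hu.1).trans hgz.le)
  exact hgz.not_ge (hg_max (h.relClass_eq hzX huz ▸ h.mem_relClass_self hzX))

theorem sSup_mem_classMinima (h : IsConvexClosedEquiv X r) (hX : IsCompact X) {A : Set ℝ}
    (hA : A ⊆ classMinima X r) (hne : A.Nonempty) (hbdd : BddAbove A) :
    sSup A ∈ classMinima X r := by
  have hcX : sSup A ∈ X :=
    closure_minimal (fun a ha => (hA ha).1.1) hX.isClosed (csSup_mem_closure hne hbdd)
  obtain ⟨m, hm, hmc⟩ := h.exists_mem_classMinima_mem_relClass hX hcX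
  have hcm : sSup A ∈ relClass X r m := h.relClass_eq hcX hmc ▸ h.mem_relClass_self hcX
  suffices m = sSup A from this ▸ hm
  refine (hm.2 hcm).antisymm (not_lt.1 fun hmc_lt => ?_)
  obtain ⟨a, haA, hma⟩ := exists_lt_of_lt_csSup hne hmc_lt
  have ham : a ∈ relClass X r m :=
    h.mem_relClass_of_le_of_le hm.1.1 hm.1 hcm (hA haA).1.1 hma.le (le_csSup hbdd haA)
  exact hma.ne' (h.eq_of_mem_relClass hm (hA haA) ham)

theorem nontrivial_classMinima (h : IsConvexClosedEquiv X r) (hX : IsCompact X)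
    (htwo : ∃ x ∈ X, ∃ y ∈ X, ¬ r x y) : (classMinima X r).Nontrivial := by
  obtain ⟨x, hx, y, hy, hxy⟩ := htwo
  obtain ⟨m, hm, hmx⟩ := h.exists_mem_classMinima_mem_relClass hX hx
  obtain ⟨m', hm', hm'y⟩ := h.exists_mem_classMinima_mem_relClass hX hy
  refine ⟨m, hm, m', hm', fun hmm' => hxy ?_⟩
  have hxy_class : relClass X r x = relClass X r y := by
    rw [← h.relClass_eq hx hmx, ← h.relClass_eq hy hm'y, hmm']
  exact (hxy_class ▸ h.mem_relClass_self hx : x ∈ relClass X r y).2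

end IsConvexClosedEquiv

theorem stmt10_general (X : Set ℝ) (hcl : IsClosed X)
    (hbd : Bornology.IsBounded X)
    (r : ℝ → ℝ → Prop)
    (hrefl : ∀ x ∈ X, r x x)
    (hsymm : ∀ x ∈ X, ∀ y ∈ X, r x y → r y x)
    (htrans : ∀ x ∈ X, ∀ y ∈ X, ∀ z ∈ X, r x y → r y z → r x z)
    (hclosed : ∀ x ∈ X, IsClosed {y : ℝ | y ∈ X ∧ r y x})
    (hconv : ∀ x ∈ X, ∀ a ∈ X, ∀ b ∈ X, ∀ z ∈ X,
      r a x → r b x → a ≤ z → z ≤ b → r z x)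
    (hsucc : ∀ x ∈ X, ∀ y ∈ X,
      (∀ z ∈ X, ¬ (x < z ∧ z < y) ∧ ¬ (y < z ∧ z < x)) → r x y)
    (htwo : ∃ x ∈ X, ∃ y ∈ X, ¬ r x y) :
    ¬ Set.Countable {x : ℝ | x ∈ X ∧ ∀ y ∈ X, r y x → y = x} := by
  have h : IsConvexClosedEquiv X r := ⟨hrefl, hsymm, htrans, hclosed, hconv⟩
  have hX : IsCompact X := Metric.isCompact_of_isClosed_isBounded hcl hbd
  intro hS
  refine not_countable_of_exists_between_of_sSup_mem
    (fun u hu v hv huv => h.exists_mem_classMinima_between hX hsucc hu hv huv)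
    (fun A hA hne hbdd => h.sSup_mem_classMinima hX hA hne hbdd)
    (h.nontrivial_classMinima hX htwo) ?_
  exact (h.countable_classMinima_diff hX).of_sdiff hS

/-- If a closed bounded nonempty subset of ℝ carries an equivalence relation with
closed, order-convex classes, containing the successor relation, and with at least
two classes, then uncountably many classes are singletons. -/
theorem stmt10 (X : Set ℝ) (hne : X.Nonempty) (hcl : IsClosed X)
    (hbd : Bornology.IsBounded X)
    (r : ℝ → ℝ → Prop)
    (hrefl : ∀ x ∈ X, r x x)
    (hsymm : ∀ x ∈ X, ∀ y ∈ X, r x y → r y x)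
    (htrans : ∀ x ∈ X, ∀ y ∈ X, ∀ z ∈ X, r x y → r y z → r x z)
    (hclosed : ∀ x ∈ X, IsClosed {y : ℝ | y ∈ X ∧ r y x})
    (hconv : ∀ x ∈ X, ∀ a ∈ X, ∀ b ∈ X, ∀ z ∈ X,
      r a x → r b x → a ≤ z → z ≤ b → r z x)
    (hsucc : ∀ x ∈ X, ∀ y ∈ X,
      (∀ z ∈ X, ¬ (x < z ∧ z < y) ∧ ¬ (y < z ∧ z < x)) → r x y)
    (htwo : ∃ x ∈ X, ∃ y ∈ X, ¬ r x y) :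
    ¬ Set.Countable {x : ℝ | x ∈ X ∧ ∀ y ∈ X, r y x → y = x} :=
  stmt10_general X hcl hbd r hrefl hsymm htrans hclosed hconv hsucc htwo
end

section
/- Suppose ℝ is partitioned into three pairwise disjoint nonempty sets A₀, A₁, A₂ whose union is ℝ, such that each Aᵢ is a union of closed intervals (i.e., each connected component of each Aᵢ is a closed set), and such that between any point of Aⱼ and any point of A_k (for j ≠ k) there lies a point of the third set Aᵢ. Then uncountably many connected components of A₀ ∪ A₁ ∪ A₂'s pieces are singletons; in particular at least one of the Aᵢ has a connected component consisting of a single point. -/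
/-!
The connected components of the sets `A i` partition `ℝ` into closed intervals, and there are at
least two of them. Call `x` an endpoint if its block is not a neighbourhood of `x`. The endpoints
form a closed set without isolated points: if a punctured neighbourhood of `x` contains no
endpoint, each of its two halves lies in a single block by connectedness, and these blocks
contain `x` because blocks are closed, so the block of `x` is a neighbourhood of `x`. Having two
blocks, `ℝ` has an endpoint, so the endpoints form a nonempty perfect set, which is uncountable.
A block with more than one point contains a rational and has at most two endpoints, so only
countably many endpoints lie in such blocks; all other endpoints are singleton blocks.
-/

open Set Filter Topology Function

theorem Perfect.not_countable {α : Type*} [MetricSpace α] [CompleteSpace α] {C : Set α}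
    (hC : Perfect C) (hne : C.Nonempty) : ¬ C.Countable := by
  intro hCc
  obtain ⟨f, hfC, -, hf⟩ := hC.exists_nat_bool_injection hne
  have : Uncountable (ℕ → Bool) := by
    rw [← Cardinal.aleph0_lt_mk_iff]
    simpa using Cardinal.cantor Cardinal.aleph0
  have hmaps : MapsTo f univ C := fun x _ => hfC (mem_range_self x)
  exact not_countable_univ (hmaps.countable_of_injOn hf.injOn hCc)

/-- `P x` is the block containing `x` of a partition of `α` into closed intervals. -/
structure IsClosedIntervalPartition {α : Type*} [LinearOrder α] [TopologicalSpace α]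
    (P : α → Set α) : Prop where
  mem_self (x : α) : x ∈ P x
  eq_of_mem {x y : α} : y ∈ P x → P y = P x
  isClosed (x : α) : IsClosed (P x)
  ordConnected (x : α) : (P x).OrdConnected

def blockEndpoints {α : Type*} [TopologicalSpace α] (P : α → Set α) : Set α :=
  {x | P x ∉ 𝓝 x}

namespace IsClosedIntervalPartition

section LinearOrder

variable {α : Type*} [LinearOrder α] [TopologicalSpace α] {P : α → Set α}

lemma disjoint_of_notMem (hP : IsClosedIntervalPartition P) {x y : α} (h : y ∉ P x) :
    Disjoint (P x) (P y) :=
  disjoint_left.2 fun _ hzx hzy =>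
    h ((hP.eq_of_mem hzx).symm.trans (hP.eq_of_mem hzy) ▸ hP.mem_self y)

lemma isClosed_blockEndpoints (hP : IsClosedIntervalPartition P) :
    IsClosed (blockEndpoints P) := by
  refine isOpen_compl_iff.1 (isOpen_iff_mem_nhds.2 fun x hx => ?_)
  have hx : P x ∈ 𝓝 x := not_not.1 hx
  filter_upwards [eventually_mem_nhds_iff.2 hx, hx] with y hxy hy
  simpa [blockEndpoints, hP.eq_of_mem hy] using hxy

lemma isLeast_or_isGreatest_of_mem_blockEndpoints [OrderTopology α]
    (hP : IsClosedIntervalPartition P) {x : α} (hx : x ∈ blockEndpoints P) :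
    IsLeast (P x) x ∨ IsGreatest (P x) x := by
  simp only [IsLeast, IsGreatest, hP.mem_self, true_and, mem_lowerBounds, mem_upperBounds]
  by_contra! h
  obtain ⟨⟨a, ha, hax⟩, ⟨b, hb, hxb⟩⟩ := h
  exact hx (mem_of_superset (Icc_mem_nhds hax hxb) ((hP.ordConnected x).out ha hb))

end LinearOrder

section ConditionallyComplete

variable {α : Type*} [ConditionallyCompleteLinearOrder α] [TopologicalSpace α] [OrderTopology α]
  [DenselyOrdered α] {P : α → Set α}

lemma Icc_subset_of_forall_mem_nhds (hP : IsClosedIntervalPartition P) {a b c : α} (hab : a < b)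
    (h : ∀ t ∈ Ioo a b, P t ∈ 𝓝 t) (hc : c ∈ Icc a b) : Icc a b ⊆ P c := by
  obtain ⟨d, hd⟩ := nonempty_Ioo.2 hab
  have hIoo : Ioo a b ⊆ P d := by
    refine (isPreconnected_Ioo.subset_left_of_subset_union isOpen_interior
      (hP.isClosed d).isOpen_compl (disjoint_compl_right.mono_left interior_subset)
      (fun t ht => ?_) ⟨d, hd, mem_interior_iff_mem_nhds.2 (h d hd)⟩).trans interior_subset
    by_cases htd : t ∈ P d
    · exact Or.inl (mem_interior_iff_mem_nhds.2 (hP.eq_of_mem htd ▸ h t ht))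
    · exact Or.inr ((hP.disjoint_of_notMem htd).subset_compl_left (hP.mem_self t))
  have hIcc : Icc a b ⊆ P d := by
    rw [← closure_Ioo hab.ne]
    exact (hP.isClosed d).closure_subset_iff.2 hIoo
  rw [hP.eq_of_mem (hIcc hc)]
  exact hIcc

lemma blockEndpoints_nonempty (hP : IsClosedIntervalPartition P) {x y : α} (hxy : P x ≠ P y) :
    (blockEndpoints P).Nonempty := by
  by_contra h
  have hnhds : ∀ t, P t ∈ 𝓝 t := fun t => not_not.1 fun ht => h ⟨t, ht⟩
  wlog hlt : x < y generalizing x y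
  · exact this hxy.symm ((lt_or_gt_of_ne (ne_of_apply_ne P hxy)).resolve_left hlt)
  exact hxy (hP.eq_of_mem (hP.Icc_subset_of_forall_mem_nhds hlt (fun t _ => hnhds t)
    (left_mem_Icc.2 hlt.le) (right_mem_Icc.2 hlt.le))).symm

lemma perfect_blockEndpoints [NoMinOrder α] [NoMaxOrder α] (hP : IsClosedIntervalPartition P) :
    Perfect (blockEndpoints P) := by
  refine ⟨hP.isClosed_blockEndpoints, preperfect_iff_nhds.2 fun x hx U hU => ?_⟩
  by_contra! hU'
  obtain ⟨a, b, ⟨hax, hxb⟩, hab⟩ := mem_nhds_iff_exists_Ioo_subset.1 hU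
  have hnhds : ∀ t ∈ Ioo a b, t ≠ x → P t ∈ 𝓝 t :=
    fun t ht htx => not_not.1 fun h => htx (hU' t ⟨hab ht, h⟩)
  have hleft : Icc a x ⊆ P x := hP.Icc_subset_of_forall_mem_nhds hax
    (fun t ht => hnhds t ⟨ht.1, ht.2.trans hxb⟩ ht.2.ne) (right_mem_Icc.2 hax.le)
  have hright : Icc x b ⊆ P x := hP.Icc_subset_of_forall_mem_nhds hxb
    (fun t ht => hnhds t ⟨hax.trans ht.1, ht.2⟩ ht.1.ne') (left_mem_Icc.2 hxb.le)
  refine hx (mem_of_superset (Icc_mem_nhds hax hxb) ?_)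
  rw [← Icc_union_Icc_eq_Icc hax.le hxb.le]
  exact union_subset hleft hright

end ConditionallyComplete

lemma countable_blockEndpoints_inter_nontrivial {α : Type*} [LinearOrder α] [TopologicalSpace α]
    [OrderTopology α] [DenselyOrdered α] [TopologicalSpace.SeparableSpace α] {P : α → Set α}
    (hP : IsClosedIntervalPartition P) :
    (blockEndpoints P ∩ {x | (P x).Nontrivial}).Countable := by
  obtain ⟨s, hsc, hsd⟩ := TopologicalSpace.exists_countable_dense α
  have hextreme (q : α) : ({x | IsLeast (P q) x} ∪ {x | IsGreatest (P q) x}).Countable :=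
    (Subsingleton.countable fun _ ha _ hb => ha.unique hb).union
      (Subsingleton.countable fun _ ha _ hb => ha.unique hb)
  refine (hsc.biUnion fun q _ => hextreme q).mono ?_
  rintro x ⟨hx, hnt⟩
  obtain ⟨w, hw, hwx⟩ := hnt.exists_ne x
  obtain ⟨q, hqs, hq⟩ := hsd.exists_between (min_lt_max.2 hwx)
  have hqx : P q = P x :=
    hP.eq_of_mem ((hP.ordConnected x).uIcc_subset hw (hP.mem_self x) (Ioo_subset_Icc_self hq))
  exact mem_biUnion hqs (hqx ▸ hP.isLeast_or_isGreatest_of_mem_blockEndpoints hx)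

theorem not_countable_setOf_eq_singleton {P : ℝ → Set ℝ} (hP : IsClosedIntervalPartition P)
    {x y : ℝ} (hxy : P x ≠ P y) : ¬ {x | P x = {x}}.Countable := by
  intro h
  refine hP.perfect_blockEndpoints.not_countable (hP.blockEndpoints_nonempty hxy)
    ((h.union hP.countable_blockEndpoints_inter_nontrivial).mono fun z hz => ?_)
  rcases (P z).eq_singleton_or_nontrivial (hP.mem_self z) with hs | hnt
  exacts [Or.inl hs, Or.inr ⟨hz, hnt⟩]

end IsClosedIntervalPartition

section ComponentPartition

variable {ι α : Type*} [TopologicalSpace α] {A : ι → Set α}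

/-- The connected component of `x` in the part of `A` containing `x`; the other parts contribute
`connectedComponentIn (A j) x = ∅`. -/
def partComponent (A : ι → Set α) (x : α) : Set α :=
  ⋃ i, connectedComponentIn (A i) x

lemma partComponent_eq (hdisj : Pairwise (Disjoint on A)) {i : ι} {x : α} (hx : x ∈ A i) :
    partComponent A x = connectedComponentIn (A i) x := by
  refine (iUnion_subset fun j => ?_).antisymm
    (subset_iUnion (fun j => connectedComponentIn (A j) x) i)
  rcases eq_or_ne j i with rfl | hji
  · exact subset_rfl
  · rw [connectedComponentIn_eq_empty (disjoint_left.1 (hdisj hji.symm) hx)]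
    exact empty_subset _

lemma partComponent_subset (hdisj : Pairwise (Disjoint on A)) {i : ι} {x : α} (hx : x ∈ A i) :
    partComponent A x ⊆ A i :=
  partComponent_eq hdisj hx ▸ connectedComponentIn_subset _ _

lemma isClosedIntervalPartition_partComponent [LinearOrder α] [OrderClosedTopology α]
    (hdisj : Pairwise (Disjoint on A)) (hcover : ⋃ i, A i = univ)
    (hcomp : ∀ i, ∀ x ∈ A i, IsClosed (connectedComponentIn (A i) x)) :
    IsClosedIntervalPartition (partComponent A) := by
  have hA : ∀ x, ∃ i, x ∈ A i := fun x => mem_iUnion.1 (hcover ▸ mem_univ x)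
  refine ⟨fun x => ?_, fun {x y} hy => ?_, fun x => ?_, fun x => ?_⟩ <;>
    obtain ⟨i, hi⟩ := hA x <;> rw [partComponent_eq hdisj hi]
  · exact mem_connectedComponentIn hi
  · rw [partComponent_eq hdisj hi] at hy
    rw [partComponent_eq hdisj (connectedComponentIn_subset _ _ hy)]
    exact (connectedComponentIn_eq hy).symm
  · exact hcomp i x hi
  · exact isPreconnected_connectedComponentIn.ordConnected

end ComponentPartition

theorem stmt11_general (A : Fin 3 → Set ℝ)
    (hdisj : ∀ i j, i ≠ j → Disjoint (A i) (A j))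
    (hne : ∀ i, (A i).Nonempty)
    (hcover : (⋃ i, A i) = Set.univ)
    (hcomp : ∀ i, ∀ x ∈ A i, IsClosed (connectedComponentIn (A i) x)) :
    ¬ Set.Countable {x : ℝ | ∃ i, x ∈ A i ∧ connectedComponentIn (A i) x = {x}} ∧
    ∃ i, ∃ x ∈ A i, connectedComponentIn (A i) x = {x} := by
  have hP := isClosedIntervalPartition_partComponent hdisj hcover hcomp
  obtain ⟨x₀, hx₀⟩ := hne 0
  obtain ⟨x₁, hx₁⟩ := hne 1
  have hne₀₁ : partComponent A x₀ ≠ partComponent A x₁ := fun h => disjoint_left.1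
    (hdisj 0 1 (by decide)) (partComponent_subset hdisj hx₀ (h ▸ hP.mem_self x₁)) hx₁
  have hsub : {x | partComponent A x = {x}} ⊆
      {x : ℝ | ∃ i, x ∈ A i ∧ connectedComponentIn (A i) x = {x}} := fun x hx => by
    obtain ⟨i, hi⟩ := mem_iUnion.1 (hcover ▸ mem_univ x)
    exact ⟨i, hi, (partComponent_eq hdisj hi).symm.trans hx⟩
  have hunc := fun h => hP.not_countable_setOf_eq_singleton hne₀₁ (Countable.mono hsub h)
  obtain ⟨x, i, hi, hx⟩ := nonempty_iff_ne_empty.2 fun h => hunc (h ▸ countable_empty :)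
  exact ⟨hunc, i, x, hi, hx⟩

/-- If ℝ is partitioned into three nonempty sets whose connected components are all
closed, and between points of any two of the sets lies a point of the third, then
uncountably many connected components are singletons; in particular some component
is a single point. -/
theorem stmt11 (A : Fin 3 → Set ℝ)
    (hdisj : ∀ i j, i ≠ j → Disjoint (A i) (A j))
    (hne : ∀ i, (A i).Nonempty)
    (hcover : (⋃ i, A i) = Set.univ)
    (hcomp : ∀ i, ∀ x ∈ A i, IsClosed (connectedComponentIn (A i) x))
    (hbetween : ∀ i j k : Fin 3, i ≠ j → j ≠ k → i ≠ k →
      ∀ x ∈ A j, ∀ y ∈ A k, x < y → ∃ z ∈ A i, x < z ∧ z < y) :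
    ¬ Set.Countable {x : ℝ | ∃ i, x ∈ A i ∧ connectedComponentIn (A i) x = {x}} ∧
    ∃ i, ∃ x ∈ A i, connectedComponentIn (A i) x = {x} :=
  stmt11_general A hdisj hne hcover hcomp
end

section
/- Let J ⊆ ℝ² be upward closed for the strict componentwise relation (if p ∈ J and p.1 < q.1 and p.2 < q.2 then q ∈ J), nonempty, not all of ℝ², and open. Then the topological boundary of J is nonempty, and any two distinct boundary points p, q satisfy (p.1 ≤ q.1 → q.2 ≤ p.2) or (p.2 ≤ q.2 → q.1 ≤ p.1), i.e., the boundary contains no pair strictly ordered in both coordinates. -/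
/-- The frontier of a nonempty, proper, open, upward-closed subset of ℝ² is
nonempty and contains no pair of points strictly ordered in both coordinates. -/
theorem stmt16 (J : Set (ℝ × ℝ)) (hopen : IsOpen J) (hne : J.Nonempty)
    (hproper : J ≠ Set.univ)
    (hup : ∀ p ∈ J, ∀ q : ℝ × ℝ, p.1 < q.1 → p.2 < q.2 → q ∈ J) :
    (frontier J).Nonempty ∧
    ∀ p ∈ frontier J, ∀ q ∈ frontier J, p.1 < q.1 → p.2 < q.2 → False := by
  constructor
  · rw [Set.nonempty_iff_ne_empty]
    intro h
    have hclopen : IsClopen J := isClopen_iff_frontier_eq_empty.mpr h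
    rcases isClopen_iff.mp hclopen with h0 | h1
    · exact hne.ne_empty h0
    · exact hproper h1
  · intro p hp q hq h1 h2
    have hqJ : q ∉ J := by
      intro hqJ
      exact hq.2 (by rwa [hopen.interior_eq])
    have hpcl : p ∈ closure J := hp.1
    have hO : IsOpen {r : ℝ × ℝ | r.1 < q.1 ∧ r.2 < q.2} := by
      refine IsOpen.and ?_ ?_
      · exact isOpen_lt continuous_fst continuous_const
      · exact isOpen_lt continuous_snd continuous_const
    rcases (mem_closure_iff.mp hpcl) _ hO ⟨h1, h2⟩ with ⟨r, hr1, hr2⟩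
    exact hqJ (hup r hr2 q hr1.1 hr1.2)
end
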